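/- Let p be a trigonometric polynomial on the unit circle whose nonzero Fourier coefficients are all supported in [2^n, 2^{n+1}]. There exist an absolute constant c > 0 and m ∈ ℕ such that for all n ≥ m, ‖p‖_{*,n-m} ≥ c‖p‖_∞, where ‖p‖_{*,ℓ} = sup over intervals I ⊂ ℝ/ℤ with 2^{-ℓ} ≤ |I| ≤ 2^{-(ℓ-1)} of (1/|I|)∫_I |p(e(θ)) - (1/|I|)∫_I p| dθ. -/

import Mathlib

open Complex Real

/-- The trigonometric polynomial with coefficients `c : ℤ → ℂ` supported in
`[2^n, 2^{n+1}]`, evaluated at `e(θ) = e^{2πiθ}`. -/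
noncomputable def trigPoly (n : ℕ) (c : ℤ → ℂ) (θ : ℝ) : ℂ :=
  ∑ k ∈ Finset.Icc ((2 : ℤ) ^ n) ((2 : ℤ) ^ (n + 1)),
    c k * Complex.exp (2 * π * I * k * θ)

/-- The local mean-oscillation seminorm `‖p‖_{*,ℓ}`: supremum over intervals
`I = [a, a+h]` with `2^{-ℓ} ≤ h ≤ 2^{-(ℓ-1)}` of `(1/h)∫_I |p - (1/h)∫_I p|`. -/
noncomputable def starNormLoc (f : ℝ → ℂ) (ℓ : ℕ) : ℝ :=
  ⨆ a : ℝ, ⨆ h : ℝ,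
    ⨆ _ : h ∈ Set.Icc ((2 : ℝ) ^ (-(ℓ : ℝ))) ((2 : ℝ) ^ (-((ℓ : ℝ) - 1))),
      (1 / h) * ∫ θ in a..(a + h),
        ‖f θ - (1 / h : ℂ) * ∫ s in a..(a + h), f s‖

/-!
Write `p = trigPoly n c` with `n = L + 3` and let `T = trapezoidKernel (L + 1)`, whose Fourier
coefficients equal `1` on `[2^n, 2^{n+1}]` and vanish at `0`. By orthogonality,
`p(θ) = ∫ (p(θ - u) - A) T(u) du` over a period for every constant `A`; take for `A` the mean of `p`
over the interval `I` of length `h = 2^{-L}` centred at `θ`. On `|u| ≤ h/2` we have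
`‖T‖ ≤ 2^{n+1} = 16/h`, so that part is at most `16` times the mean oscillation of `p` on `I`.
For `|u| ≥ h/2` the decay `‖T(u)‖ ≤ 2^{-(n+1)} u⁻²` and `‖p - A‖ ≤ 2‖p‖_∞` bound the tails by
`‖p‖_∞ / 2`. Taking the supremum over `θ` gives `‖p‖_∞ ≤ 32 ‖p‖_{*,L}`.
-/

noncomputable def expMode (k : ℤ) (θ : ℝ) : ℂ := exp (2 * π * I * k * θ)

namespace expMode

@[fun_prop]
lemma continuous (k : ℤ) : Continuous (expMode k) := by
  unfold expMode; fun_prop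

lemma norm_eq_one (k : ℤ) (θ : ℝ) : ‖expMode k θ‖ = 1 := by
  rw [expMode, norm_exp]
  simp

lemma mul (k j : ℤ) (θ : ℝ) : expMode k θ * expMode j θ = expMode (k + j) θ := by
  unfold expMode; rw [← Complex.exp_add]; push_cast; ring_nf

lemma sub_apply (k : ℤ) (θ u : ℝ) : expMode k (θ - u) = expMode k θ * expMode (-k) u := by
  unfold expMode; rw [← Complex.exp_add]; push_cast; ring_nf

lemma zero_apply (θ : ℝ) : expMode 0 θ = 1 := by
  simp [expMode]

lemma integral_period (a : ℝ) (m : ℤ) :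
    ∫ θ in a..a + 1, expMode m θ = if m = 0 then 1 else 0 := by
  split_ifs with hm
  · simp [hm, zero_apply]
  have hc : 2 * π * I * m ≠ 0 := by simp [Real.pi_ne_zero, I_ne_zero, hm]
  have hperiod : exp (2 * π * I * m * ((a + 1 : ℝ) : ℂ)) = exp (2 * π * I * m * a) := by
    rw [show 2 * π * I * m * ((a + 1 : ℝ) : ℂ) = 2 * π * I * m * a + m * (2 * π * I) by
      push_cast; ring, Complex.exp_add, exp_int_mul_two_pi_mul_I, mul_one]
  simp only [expMode]
  rw [integral_exp_mul_complex hc, hperiod, sub_self, zero_div]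

lemma sub_one_mul_sum_Ico (u : ℝ) {a c : ℤ} (hac : a ≤ c) :
    (expMode 1 u - 1) * ∑ k ∈ Finset.Ico a c, expMode k u = expMode c u - expMode a u := by
  induction c, hac using Int.leInduction with
  | base => simp
  | succ c hac ih =>
    rw [← Finset.insert_Ico_right_eq_Ico_add_one hac, Finset.sum_insert (by simp), mul_add, ih,
      sub_mul, one_mul, mul_comm, mul, add_comm c 1]
    ring

lemma four_mul_abs_le_norm_sub_one {u : ℝ} (hu : |u| ≤ 1 / 2) : 4 * |u| ≤ ‖expMode 1 u - 1‖ := by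
  have hsin : 2 / π * |π * u| ≤ |Real.sin (π * u)| :=
    Real.mul_abs_le_abs_sin (by rw [abs_mul, abs_of_pos pi_pos]; nlinarith [pi_pos])
  rw [abs_mul, abs_of_pos pi_pos, ← mul_assoc, div_mul_cancel₀ _ pi_ne_zero] at hsin
  have h : expMode 1 u = exp (I * ((2 * π * u : ℝ) : ℂ)) := by
    simp only [expMode]; push_cast; ring_nf
  rw [h, norm_exp_I_mul_ofReal_sub_one, norm_mul, Real.norm_eq_abs, Real.norm_eq_abs,
    show 2 * π * u / 2 = π * u by ring]
  norm_num
  linarith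

lemma norm_sum_Icc_le {u : ℝ} (hu0 : u ≠ 0) (hu : |u| ≤ 1 / 2) (a b : ℤ) :
    ‖∑ k ∈ Finset.Icc a b, expMode k u‖ ≤ 1 / (2 * |u|) := by
  have hu0' : 0 < |u| := abs_pos.mpr hu0
  rcases lt_or_ge b a with hba | hab
  · rw [Finset.Icc_eq_empty (not_le.mpr hba), Finset.sum_empty, norm_zero]
    positivity
  have hden : 4 * |u| ≤ ‖expMode 1 u - 1‖ := four_mul_abs_le_norm_sub_one hu
  have hnum : ‖expMode 1 u - 1‖ * ‖∑ k ∈ Finset.Icc a b, expMode k u‖ ≤ 2 := by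
    rw [← norm_mul, ← Finset.Ico_add_one_right_eq_Icc, sub_one_mul_sum_Ico u (by omega)]
    exact (norm_sub_le _ _).trans (by simp [norm_eq_one]; norm_num)
  rw [le_div_iff₀ (by positivity)]
  nlinarith [norm_nonneg (∑ k ∈ Finset.Icc a b, expMode k u)]

end expMode

lemma integral_expMode_neg_mul_sum_mul_sum (a : ℝ) (K : ℤ) (s t : Finset ℤ) :
    ∫ u in a..a + 1, expMode (-K) u * ((∑ k ∈ s, expMode k u) * ∑ j ∈ t, expMode j u) =
      ((t.filter fun j => K - j ∈ s).card : ℂ) := by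
  have hexpand : ∀ u, expMode (-K) u * ((∑ k ∈ s, expMode k u) * ∑ j ∈ t, expMode j u) =
      ∑ j ∈ t, ∑ k ∈ s, expMode (k + j - K) u := by
    intro u
    simp_rw [Finset.sum_mul_sum, Finset.mul_sum, expMode.mul]
    rw [Finset.sum_comm]
    simp_rw [sub_eq_add_neg, add_comm _ (-K)]
  simp_rw [hexpand]
  rw [intervalIntegral.integral_finsetSum fun j _ =>
    Continuous.intervalIntegrable (by fun_prop) _ _]
  simp_rw [intervalIntegral.integral_finsetSum fun k _ =>
      (expMode.continuous (k + _ - K)).intervalIntegrable a (a + 1), expMode.integral_period,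
    sub_eq_zero, ← eq_sub_iff_add_eq, Finset.sum_ite_eq', Finset.card_filter]
  push_cast
  rfl

/-- A modulated de la Vallée Poussin kernel: its Fourier coefficients form a trapezoid, equal to
`1` on `[4·2^N, 8·2^N]` and supported in `[2·2^N, 10·2^N]`. -/
noncomputable def trapezoidKernel (N : ℕ) (u : ℝ) : ℂ :=
  (2 * 2 ^ N + 1 : ℂ)⁻¹ * ((∑ k ∈ Finset.Icc (3 * 2 ^ N : ℤ) (9 * 2 ^ N), expMode k u) *
    ∑ j ∈ Finset.Icc (-2 ^ N : ℤ) (2 ^ N), expMode j u)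

namespace trapezoidKernel

@[fun_prop]
lemma continuous (N : ℕ) : Continuous (trapezoidKernel N) := by
  unfold trapezoidKernel; fun_prop

lemma fourierCoeff (N : ℕ) (K : ℤ) :
    ∫ u in -(1 / 2)..1 / 2, expMode (-K) u * trapezoidKernel N u =
      (2 * 2 ^ N + 1 : ℂ)⁻¹ * ((Finset.Icc (-2 ^ N : ℤ) (2 ^ N)).filter
        fun j => K - j ∈ Finset.Icc (3 * 2 ^ N : ℤ) (9 * 2 ^ N)).card := by
  simp_rw [trapezoidKernel, mul_left_comm (expMode (-K) _) (2 * 2 ^ N + 1 : ℂ)⁻¹]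
  rw [intervalIntegral.integral_const_mul, ← integral_expMode_neg_mul_sum_mul_sum (-(1 / 2))]
  norm_num

lemma fourierCoeff_eq_one (N : ℕ) {K : ℤ} (hK : K ∈ Finset.Icc (4 * 2 ^ N : ℤ) (8 * 2 ^ N)) :
    ∫ u in -(1 / 2)..1 / 2, expMode (-K) u * trapezoidKernel N u = 1 := by
  rw [fourierCoeff, Finset.filter_true_of_mem, Int.card_Icc]
  · rw [show (2 ^ N + 1 - -2 ^ N : ℤ) = ((2 * 2 ^ N + 1 : ℕ) : ℤ) by push_cast; ring,
      Int.toNat_natCast]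
    push_cast
    exact inv_mul_cancel₀ (by norm_cast)
  · intro j hj
    simp only [Finset.mem_Icc] at hj hK ⊢
    omega

lemma integral_eq_zero (N : ℕ) : ∫ u in -(1 / 2)..1 / 2, trapezoidKernel N u = 0 := by
  have h := fourierCoeff N 0
  simp only [neg_zero, expMode.zero_apply, one_mul] at h
  rw [h, Finset.filter_false_of_mem, Finset.card_empty, Nat.cast_zero, mul_zero]
  intro j hj
  have : (0 : ℤ) < 2 ^ N := by positivity
  simp only [Finset.mem_Icc] at hj ⊢
  omega

lemma norm_le (N : ℕ) (u : ℝ) : ‖trapezoidKernel N u‖ ≤ 2 ^ (N + 3) := by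
  have hsum : ∀ a b : ℤ, a ≤ b → ‖∑ k ∈ Finset.Icc a b, expMode k u‖ ≤ b + 1 - a := by
    intro a b hab
    have hcard : ((Finset.Icc a b).card : ℤ) = b + 1 - a := by rw [Int.card_Icc]; omega
    refine (norm_sum_le _ _).trans_eq ?_
    simp only [expMode.norm_eq_one, Finset.sum_const, nsmul_eq_mul, mul_one]
    rw [← Int.cast_natCast, hcard]; push_cast; ring
  have hpos : (0 : ℤ) < 2 ^ N := by positivity
  have h1 : (1 : ℝ) ≤ 2 ^ N := one_le_pow₀ (by norm_num)
  have hnorm : ‖(2 * 2 ^ N + 1 : ℂ)‖ = 2 * 2 ^ N + 1 := by norm_cast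
  have hwide := hsum (3 * 2 ^ N) (9 * 2 ^ N) (by omega)
  have hnarrow := hsum (-2 ^ N) (2 ^ N) (by omega)
  push_cast at hwide hnarrow
  calc ‖trapezoidKernel N u‖
      ≤ (2 * 2 ^ N + 1)⁻¹ * ((9 * 2 ^ N + 1 - 3 * 2 ^ N) * (2 ^ N + 1 - -2 ^ N)) := by
        rw [trapezoidKernel, norm_mul, norm_mul, norm_inv, hnorm]
        exact mul_le_mul_of_nonneg_left
          (mul_le_mul hwide hnarrow (norm_nonneg _) (by linarith)) (by positivity)
    _ = 6 * 2 ^ N + 1 := by field_simp; ring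
    _ ≤ 2 ^ (N + 3) := by rw [pow_add]; linarith

lemma norm_le_div_sq (N : ℕ) {u : ℝ} (hu0 : u ≠ 0) (hu : |u| ≤ 1 / 2) :
    ‖trapezoidKernel N u‖ ≤ (2 ^ (N + 3))⁻¹ / u ^ 2 := by
  have hnorm : ‖(2 * 2 ^ N + 1 : ℂ)‖ = 2 * 2 ^ N + 1 := by norm_cast
  have h1 : (1 : ℝ) ≤ 2 ^ N := one_le_pow₀ (by norm_num)
  have hu2 : 0 < |u| := abs_pos.mpr hu0
  calc ‖trapezoidKernel N u‖ ≤ (2 * 2 ^ N + 1)⁻¹ * (1 / (2 * |u|) * (1 / (2 * |u|))) := by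
        rw [trapezoidKernel, norm_mul, norm_mul, norm_inv, hnorm]
        gcongr <;> exact expMode.norm_sum_Icc_le hu0 hu _ _
    _ = (4 * (2 * 2 ^ N + 1))⁻¹ / u ^ 2 := by
        rw [← sq_abs u]; field_simp; ring
    _ ≤ (2 ^ (N + 3))⁻¹ / u ^ 2 := by
        gcongr
        rw [pow_add]; linarith

end trapezoidKernel

namespace trigPoly

lemma eq_sum_expMode (n : ℕ) (c : ℤ → ℂ) (θ : ℝ) :
    trigPoly n c θ = ∑ k ∈ Finset.Icc ((2 : ℤ) ^ n) (2 ^ (n + 1)), c k * expMode k θ := rfl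

@[fun_prop]
lemma continuous (n : ℕ) (c : ℤ → ℂ) : Continuous (trigPoly n c) := by
  simp_rw [funext (eq_sum_expMode n c)]; fun_prop

lemma bddAbove_range_norm (n : ℕ) (c : ℤ → ℂ) : BddAbove (Set.range fun θ => ‖trigPoly n c θ‖) := by
  refine ⟨∑ k ∈ Finset.Icc ((2 : ℤ) ^ n) (2 ^ (n + 1)), ‖c k‖, ?_⟩
  rintro _ ⟨θ, rfl⟩
  simp only [eq_sum_expMode]
  refine (norm_sum_le _ _).trans_eq (Finset.sum_congr rfl fun k _ => ?_)
  rw [norm_mul, expMode.norm_eq_one, mul_one]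

lemma integral_sub_mul_trapezoidKernel (N : ℕ) (c : ℤ → ℂ) (θ : ℝ) :
    ∫ u in -(1 / 2)..1 / 2, trigPoly (N + 2) c (θ - u) * trapezoidKernel N u =
      trigPoly (N + 2) c θ := by
  simp_rw [eq_sum_expMode, Finset.sum_mul, expMode.sub_apply, mul_assoc]
  rw [intervalIntegral.integral_finsetSum fun K _ =>
    Continuous.intervalIntegrable (by fun_prop) _ _]
  refine Finset.sum_congr rfl fun K hK => ?_
  rw [intervalIntegral.integral_const_mul, intervalIntegral.integral_const_mul,
    trapezoidKernel.fourierCoeff_eq_one, mul_one]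
  simp only [Finset.mem_Icc] at hK ⊢
  constructor <;> linarith [hK.1, hK.2, show ((2 : ℤ) ^ (N + 2)) = 4 * 2 ^ N by ring,
    show ((2 : ℤ) ^ (N + 2 + 1)) = 8 * 2 ^ N by ring]

end trigPoly

lemma norm_intervalIntegral_le_of_norm_le_div_sq {F : ℝ → ℂ} {C α β : ℝ} (hα : 0 < α)
    (hαβ : α ≤ β) (hF : ∀ u ∈ Set.Icc α β, ‖F u‖ ≤ C / u ^ 2) :
    ‖∫ u in α..β, F u‖ ≤ C / α := by
  have hC : 0 ≤ C := by
    have := (norm_nonneg _).trans (hF α ⟨le_rfl, hαβ⟩)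
    rwa [div_nonneg_iff, or_iff_left (by intro h; nlinarith [h.2]), and_iff_left (by positivity)]
      at this
  have hne : ∀ u ∈ Set.uIcc α β, u ≠ 0 := fun u hu =>
    (hα.trans_le (Set.uIcc_of_le hαβ ▸ hu).1).ne'
  have hderiv : ∀ u ∈ Set.uIcc α β, HasDerivAt (fun u => -C * u⁻¹) (C / u ^ 2) u := fun u hu =>
    ((hasDerivAt_inv (hne u hu)).const_mul (-C)).congr_deriv (by ring)
  have hcont : ContinuousOn (fun u : ℝ => C / u ^ 2) (Set.uIcc α β) :=
    continuousOn_const.div (by fun_prop) fun u hu => pow_ne_zero 2 (hne u hu)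
  calc ‖∫ u in α..β, F u‖ ≤ ∫ u in α..β, C / u ^ 2 :=
        intervalIntegral.norm_integral_le_of_norm_le hαβ
          (.of_forall fun u hu => hF u (Set.Ioc_subset_Icc_self hu)) hcont.intervalIntegrable
    _ = C / α - C / β := by
        rw [intervalIntegral.integral_eq_sub_of_hasDerivAt hderiv hcont.intervalIntegrable]
        ring
    _ ≤ C / α := sub_le_self _ (div_nonneg hC (hα.le.trans hαβ))

section ReproducingKernel

variable {p T : ℝ → ℂ} {θ : ℝ}

lemma integral_sub_const_mul_eq (A : ℂ) (hp : Continuous p) (hT : Continuous T)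
    (hrepro : ∫ u in -(1 / 2)..1 / 2, p (θ - u) * T u = p θ)
    (hT0 : ∫ u in -(1 / 2)..1 / 2, T u = 0) :
    ∫ u in -(1 / 2)..1 / 2, (p (θ - u) - A) * T u = p θ := by
  simp_rw [sub_mul]
  rw [intervalIntegral.integral_sub (Continuous.intervalIntegrable (by fun_prop) _ _)
    (Continuous.intervalIntegrable (by fun_prop) _ _), intervalIntegral.integral_const_mul,
    hrepro, hT0, mul_zero, sub_zero]

lemma norm_integral_sub_mul_le (A : ℂ) {B r : ℝ} (hp : Continuous p)
    (hB : ∀ u, ‖T u‖ ≤ B) (hr : 0 ≤ r) :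
    ‖∫ u in -r..r, (p (θ - u) - A) * T u‖ ≤ B * ∫ t in θ - r..θ + r, ‖p t - A‖ :=
  calc ‖∫ u in -r..r, (p (θ - u) - A) * T u‖ ≤ ∫ u in -r..r, B * ‖p (θ - u) - A‖ :=
        intervalIntegral.norm_integral_le_of_norm_le (by linarith) (.of_forall fun u _ => by
          rw [norm_mul, mul_comm]; exact mul_le_mul_of_nonneg_right (hB u) (norm_nonneg _))
          (Continuous.intervalIntegrable (by fun_prop) _ _)
    _ = B * ∫ t in θ - r..θ + r, ‖p t - A‖ := by
        rw [intervalIntegral.integral_const_mul,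
          intervalIntegral.integral_comp_sub_left (fun t => ‖p t - A‖), sub_neg_eq_add]

lemma norm_le_of_reproducing_kernel (A : ℂ) {h B D K : ℝ} (hp : Continuous p) (hT : Continuous T)
    (hrepro : ∫ u in -(1 / 2)..1 / 2, p (θ - u) * T u = p θ)
    (hT0 : ∫ u in -(1 / 2)..1 / 2, T u = 0)
    (hB : ∀ u, ‖T u‖ ≤ B) (hD : ∀ u, u ≠ 0 → |u| ≤ 1 / 2 → ‖T u‖ ≤ D / u ^ 2)
    (hK : ∀ t, ‖p t - A‖ ≤ K) (hh : 0 < h) (hh1 : h ≤ 1) :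
    ‖p θ‖ ≤ B * (∫ t in θ - h / 2..θ + h / 2, ‖p t - A‖) + 4 * K * D / h := by
  set G : ℝ → ℂ := fun u => (p (θ - u) - A) * T u with hG
  have hGc : Continuous G := by fun_prop
  have hK0 : 0 ≤ K := (norm_nonneg _).trans (hK 0)
  have hdecay : ∀ u, u ≠ 0 → |u| ≤ 1 / 2 → ‖G u‖ ≤ K * D / u ^ 2 := fun u hu0 hu => by
    rw [hG, norm_mul, mul_div_assoc]
    exact mul_le_mul (hK _) (hD u hu0 hu) (norm_nonneg _) hK0
  have hleft : ‖∫ u in h / 2..1 / 2, G (-u)‖ ≤ K * D / (h / 2) :=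
    norm_intervalIntegral_le_of_norm_le_div_sq (by positivity) (by linarith) fun u hu => by
      have hu0 : 0 < u := by linarith [hu.1]
      simpa only [neg_sq] using
        hdecay (-u) (by linarith) (by rw [abs_neg, abs_of_pos hu0]; exact hu.2)
  have hright : ‖∫ u in h / 2..1 / 2, G u‖ ≤ K * D / (h / 2) :=
    norm_intervalIntegral_le_of_norm_le_div_sq (by positivity) (by linarith) fun u hu => by
      have hu0 : 0 < u := by linarith [hu.1]
      exact hdecay u hu0.ne' (by rw [abs_of_pos hu0]; exact hu.2)
  have hmid := norm_integral_sub_mul_le (θ := θ) A hp hB (r := h / 2) (by positivity)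
  have hsplit : p θ = (∫ u in h / 2..1 / 2, G (-u)) + (∫ u in -(h / 2)..h / 2, G u) +
      ∫ u in h / 2..1 / 2, G u := by
    rw [intervalIntegral.integral_comp_neg G, intervalIntegral.integral_add_adjacent_intervals
      (hGc.intervalIntegrable _ _) (hGc.intervalIntegrable _ _),
      intervalIntegral.integral_add_adjacent_intervals (hGc.intervalIntegrable _ _)
      (hGc.intervalIntegrable _ _), integral_sub_const_mul_eq A hp hT hrepro hT0]
  calc ‖p θ‖ ≤ ‖∫ u in h / 2..1 / 2, G (-u)‖ + ‖∫ u in -(h / 2)..h / 2, G u‖ +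
        ‖∫ u in h / 2..1 / 2, G u‖ := by rw [hsplit]; exact norm_add₃_le
    _ ≤ K * D / (h / 2) + B * (∫ t in θ - h / 2..θ + h / 2, ‖p t - A‖) + K * D / (h / 2) := by
        gcongr
    _ = _ := by ring

end ReproducingKernel

noncomputable def intervalMean (f : ℝ → ℂ) (a h : ℝ) : ℂ := (1 / h : ℂ) * ∫ s in a..(a + h), f s

noncomputable def meanOscillation (f : ℝ → ℂ) (a h : ℝ) : ℝ :=
  (1 / h) * ∫ θ in a..(a + h), ‖f θ - intervalMean f a h‖

section MeanOscillation

variable {f : ℝ → ℂ} {M : ℝ}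

lemma norm_intervalMean_le (hM : ∀ θ, ‖f θ‖ ≤ M) (a : ℝ) {h : ℝ} (hh : 0 < h) :
    ‖intervalMean f a h‖ ≤ M := by
  have hint := intervalIntegral.norm_integral_le_of_norm_le_const (a := a) (b := a + h)
    fun θ _ => hM θ
  rw [add_sub_cancel_left, abs_of_pos hh] at hint
  rw [intervalMean, norm_mul, norm_div, norm_one, norm_real, Real.norm_of_nonneg hh.le]
  calc 1 / h * ‖∫ s in a..a + h, f s‖ ≤ 1 / h * (M * h) := by gcongr
    _ = M := by field_simp

lemma meanOscillation_le (hM : ∀ θ, ‖f θ‖ ≤ M) (a : ℝ) {h : ℝ} (hh : 0 < h) :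
    meanOscillation f a h ≤ 2 * M := by
  have hpt : ∀ θ, ‖f θ - intervalMean f a h‖ ≤ 2 * M := fun θ =>
    (norm_sub_le _ _).trans (by linarith [hM θ, norm_intervalMean_le hM a hh])
  have hint := intervalIntegral.norm_integral_le_of_norm_le_const (a := a) (b := a + h)
    fun θ _ => (Real.norm_of_nonneg (norm_nonneg _)).trans_le (hpt θ)
  rw [add_sub_cancel_left, abs_of_pos hh] at hint
  calc meanOscillation f a h ≤ 1 / h * (2 * M * h) :=
        mul_le_mul_of_nonneg_left ((le_abs_self _).trans (Real.norm_eq_abs _ ▸ hint))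
          (by positivity)
    _ = 2 * M := by field_simp

lemma meanOscillation_le_starNormLoc (hM : ∀ θ, ‖f θ‖ ≤ M) (ℓ : ℕ) (a : ℝ) {h : ℝ}
    (hmem : h ∈ Set.Icc ((2 : ℝ) ^ (-(ℓ : ℝ))) ((2 : ℝ) ^ (-((ℓ : ℝ) - 1)))) :
    meanOscillation f a h ≤ starNormLoc f ℓ := by
  have hM0 : 0 ≤ M := (norm_nonneg _).trans (hM 0)
  have hbound : ∀ a h, (⨆ _ : h ∈ Set.Icc ((2 : ℝ) ^ (-(ℓ : ℝ))) ((2 : ℝ) ^ (-((ℓ : ℝ) - 1))),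
      meanOscillation f a h) ≤ 2 * M := fun a h =>
    Real.iSup_le (fun hmem => meanOscillation_le hM a
      ((Real.rpow_pos_of_pos two_pos _).trans_le hmem.1)) (by positivity)
  show _ ≤ ⨆ a, ⨆ h, ⨆ _ : h ∈ _, meanOscillation f a h
  refine le_ciSup_of_le ⟨2 * M, ?_⟩ a (le_ciSup_of_le ⟨2 * M, ?_⟩ h
    (ciSup_pos (f := fun _ => meanOscillation f a h) hmem).ge)
  · rintro _ ⟨a, rfl⟩
    exact Real.iSup_le (hbound a) (by positivity)
  · rintro _ ⟨h, rfl⟩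
    exact hbound a h

end MeanOscillation

lemma inv_two_pow_mem_Icc (L : ℕ) :
    ((2 : ℝ) ^ L)⁻¹ ∈ Set.Icc ((2 : ℝ) ^ (-(L : ℝ))) ((2 : ℝ) ^ (-((L : ℝ) - 1))) := by
  rw [neg_sub, Real.rpow_sub two_pos, Real.rpow_neg zero_le_two, Real.rpow_natCast,
    Real.rpow_one]
  exact ⟨le_rfl, by rw [div_eq_mul_inv]; linarith [inv_pos.mpr (pow_pos two_pos L : (0 : ℝ) < 2 ^ L)]⟩

lemma norm_trigPoly_le_meanOscillation (L : ℕ) (c : ℤ → ℂ) {M : ℝ}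
    (hM : ∀ t, ‖trigPoly (L + 3) c t‖ ≤ M) (θ : ℝ) :
    ‖trigPoly (L + 3) c θ‖ ≤
      16 * meanOscillation (trigPoly (L + 3) c) (θ - (2 ^ L)⁻¹ / 2) (2 ^ L)⁻¹ + M / 2 := by
  set p := trigPoly (L + 3) c
  set h : ℝ := (2 ^ L)⁻¹
  set a := θ - h / 2
  have hh : 0 < h := by positivity
  have hh_inv : h⁻¹ = 2 ^ L := inv_inv _
  have hK : ∀ t, ‖p t - intervalMean p a h‖ ≤ 2 * M := fun t =>
    (norm_sub_le _ _).trans (by linarith [hM t, norm_intervalMean_le hM a hh])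
  have hest := norm_le_of_reproducing_kernel _ (trigPoly.continuous _ _)
    (trapezoidKernel.continuous (L + 1)) (trigPoly.integral_sub_mul_trapezoidKernel _ c θ)
    (trapezoidKernel.integral_eq_zero _) (trapezoidKernel.norm_le _)
    (fun _ hu0 hu => trapezoidKernel.norm_le_div_sq _ hu0 hu) hK hh
    (inv_le_one_of_one_le₀ (one_le_pow₀ one_le_two))
  have hosc : (∫ t in a..a + h, ‖p t - intervalMean p a h‖) = h * meanOscillation p a h := by
    rw [meanOscillation]; field_simp
  have hnear : (2 : ℝ) ^ (L + 1 + 3) * h = 16 := by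
    rw [show L + 1 + 3 = L + 4 by ring, pow_add, ← hh_inv]
    field_simp
    norm_num
  have hfar : 4 * (2 * M) * (2 ^ (L + 1 + 3))⁻¹ / h = M / 2 := by
    rw [show L + 1 + 3 = L + 4 by ring, pow_add, ← hh_inv]
    field_simp
    ring
  rwa [show θ + h / 2 = a + h by ring, hosc, ← mul_assoc, hnear, hfar] at hest

lemma iSup_norm_trigPoly_le (L : ℕ) (c : ℤ → ℂ) :
    ⨆ θ, ‖trigPoly (L + 3) c θ‖ ≤ 32 * starNormLoc (trigPoly (L + 3) c) L := by
  set M := ⨆ θ, ‖trigPoly (L + 3) c θ‖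
  have hM : ∀ θ, ‖trigPoly (L + 3) c θ‖ ≤ M := le_ciSup (trigPoly.bddAbove_range_norm _ _)
  have : M ≤ 16 * starNormLoc (trigPoly (L + 3) c) L + M / 2 := ciSup_le fun θ =>
    (norm_trigPoly_le_meanOscillation L c hM θ).trans (by
      linarith [meanOscillation_le_starNormLoc hM L (θ - (2 ^ L)⁻¹ / 2) (inv_two_pow_mem_Icc L)])
  linarith

theorem stmt14 :
    ∃ c : ℝ, 0 < c ∧ ∃ m : ℕ,
      ∀ n : ℕ, m ≤ n → ∀ p : ℤ → ℂ,
        c * (⨆ θ : ℝ, ‖trigPoly n p θ‖) ≤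
          starNormLoc (trigPoly n p) (n - m) := by
  refine ⟨1 / 32, by norm_num, 3, fun n hn p => ?_⟩
  obtain ⟨L, rfl⟩ : ∃ L, n = L + 3 := ⟨n - 3, by omega⟩
  rw [Nat.add_sub_cancel]
  linarith [iSup_norm_trigPoly_le L p]
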